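/- arXiv:1304.0126 — 5 statements merged into one kernel-verified Lean document; each statement's English description precedes it below -/
import Mathlib

section
/- Let NF^n be the n-dimensional Leibniz algebra with basis x_1,...,x_n and multiplication [x_i, x_1] = x_{i+1} for 1 ≤ i ≤ n-1 (all other products of basis elements zero). Then every derivation d of NF^n is determined by scalars a_1,...,a_n via d(x_i) = i·a_1·x_i + Σ_{k=2}^{n+1-i} a_k·x_{i+k-1}; in particular the space of derivations of NF^n has dimension n. -/
variable (K : Type*) [Field K] [CharZero K]

/-- The bracket of the null-filiform Leibniz algebra `NF^n` in the (zero-indexed)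
basis `x_{i+1} = Pi.single i 1`: `[x_i, x_1] = x_{i+1}`, all other products of
basis vectors zero. -/
def nfF (n : ℕ) (u v : Fin n → K) : Fin n → K :=
  fun k => if h : 0 < (k : ℕ) then
    v ⟨0, k.pos⟩ * u ⟨(k : ℕ) - 1, lt_of_le_of_lt (Nat.sub_le _ _) k.isLt⟩
  else 0

/-- The bracket of `NF^n` as a bilinear map. -/
noncomputable def nfb (n : ℕ) :
    (Fin n → K) →ₗ[K] (Fin n → K) →ₗ[K] (Fin n → K) :=
  LinearMap.mk₂ K (nfF K n)
    (fun u u' v => by funext k; simp only [nfF, Pi.add_apply]; split_ifs <;> ring)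
    (fun c u v => by
      funext k; simp only [nfF, Pi.smul_apply, smul_eq_mul]; split_ifs <;> ring)
    (fun u v v' => by funext k; simp only [nfF, Pi.add_apply]; split_ifs <;> ring)
    (fun c u v => by
      funext k; simp only [nfF, Pi.smul_apply, smul_eq_mul]; split_ifs <;> ring)

/-- The space of derivations of `NF^n`. -/
noncomputable def DerNF (n : ℕ) : Submodule K ((Fin n → K) →ₗ[K] (Fin n → K)) where
  carrier := {d | ∀ u v : Fin n → K, d (nfb K n u v) = nfb K n (d u) v + nfb K n u (d v)}
  add_mem' := by
    intro d d' hd hd' u v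
    simp only [LinearMap.add_apply, map_add, hd u v, hd' u v]
    abel
  zero_mem' := by intro u v; simp
  smul_mem' := by
    intro c d hd u v
    simp only [LinearMap.smul_apply, map_smul, hd u v, smul_add]

lemma nfb_apply (n : ℕ) (u v : Fin n → K) (k : Fin n) :
    nfb K n u v k = if _ : 0 < (k : ℕ) then
      v ⟨0, k.pos⟩ * u ⟨(k : ℕ) - 1, lt_of_le_of_lt (Nat.sub_le _ _) k.isLt⟩
    else 0 := rfl

lemma single_smul' {n : ℕ} (i : Fin n) (x : K) :
    (Pi.single i x : Fin n → K) = x • (Pi.single i (1 : K) : Fin n → K) := by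
  funext k
  simp [Pi.single_apply]

/-- the candidate derivation attached to a vector of scalars `a`. -/
noncomputable def dmap (n : ℕ) (a : Fin n → K) : (Fin n → K) →ₗ[K] (Fin n → K) where
  toFun u := fun l => ((l : ℕ) + 1 : K) * a ⟨0, l.pos⟩ * u l +
    ∑ i : Fin n, if (i : ℕ) < (l : ℕ) then
      a ⟨(l : ℕ) - (i : ℕ), lt_of_le_of_lt (Nat.sub_le _ _) l.isLt⟩ * u i else 0
  map_add' u v := by
    funext l
    simp only [Pi.add_apply]
    have h : ∀ i : Fin n, i ∈ Finset.univ → (if (i : ℕ) < (l : ℕ) then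
        a ⟨(l : ℕ) - (i : ℕ), lt_of_le_of_lt (Nat.sub_le _ _) l.isLt⟩ * (u i + v i) else 0)
        = (if (i : ℕ) < (l : ℕ) then
        a ⟨(l : ℕ) - (i : ℕ), lt_of_le_of_lt (Nat.sub_le _ _) l.isLt⟩ * u i else 0)
        + (if (i : ℕ) < (l : ℕ) then
        a ⟨(l : ℕ) - (i : ℕ), lt_of_le_of_lt (Nat.sub_le _ _) l.isLt⟩ * v i else 0) := by
      intro i _; split_ifs <;> ring
    rw [Finset.sum_congr rfl h, Finset.sum_add_distrib]
    ring
  map_smul' c u := by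
    funext l
    simp only [Pi.smul_apply, smul_eq_mul, RingHom.id_apply]
    have h : ∀ i : Fin n, i ∈ Finset.univ → (if (i : ℕ) < (l : ℕ) then
        a ⟨(l : ℕ) - (i : ℕ), lt_of_le_of_lt (Nat.sub_le _ _) l.isLt⟩ * (c * u i) else 0)
        = c * (if (i : ℕ) < (l : ℕ) then
        a ⟨(l : ℕ) - (i : ℕ), lt_of_le_of_lt (Nat.sub_le _ _) l.isLt⟩ * u i else 0) := by
      intro i _; split_ifs <;> ring
    rw [Finset.sum_congr rfl h, ← Finset.mul_sum]
    ring

lemma dmap_apply (n : ℕ) (a u : Fin n → K) (l : Fin n) :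
    dmap K n a u l = ((l : ℕ) + 1 : K) * a ⟨0, l.pos⟩ * u l +
    ∑ i : Fin n, if (i : ℕ) < (l : ℕ) then
      a ⟨(l : ℕ) - (i : ℕ), lt_of_le_of_lt (Nat.sub_le _ _) l.isLt⟩ * u i else 0 := rfl

lemma dmap_single (n : ℕ) (hn : 0 < n) (a : Fin n → K) (i : Fin n) (l : Fin n) :
    dmap K n a (Pi.single i 1) l =
      if l = i then ((i : ℕ) + 1 : K) * a ⟨0, hn⟩
      else if (i : ℕ) < (l : ℕ) then
        a ⟨(l : ℕ) - (i : ℕ), lt_of_le_of_lt (Nat.sub_le _ _) l.isLt⟩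
      else 0 := by
  rw [dmap_apply]
  have hsum : (∑ j : Fin n, if (j : ℕ) < (l : ℕ) then
      a ⟨(l : ℕ) - (j : ℕ), lt_of_le_of_lt (Nat.sub_le _ _) l.isLt⟩ * (Pi.single i (1:K) : Fin n → K) j else 0)
      = if (i : ℕ) < (l : ℕ) then
        a ⟨(l : ℕ) - (i : ℕ), lt_of_le_of_lt (Nat.sub_le _ _) l.isLt⟩ else 0 := by
    have hterm : ∀ j : Fin n, (if (j : ℕ) < (l : ℕ) then
        a ⟨(l : ℕ) - (j : ℕ), lt_of_le_of_lt (Nat.sub_le _ _) l.isLt⟩ * (Pi.single i (1:K) : Fin n → K) j else 0)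
        = if j = i then (if (j : ℕ) < (l : ℕ) then
        a ⟨(l : ℕ) - (j : ℕ), lt_of_le_of_lt (Nat.sub_le _ _) l.isLt⟩ else 0) else 0 := by
      intro j
      rw [Pi.single_apply]
      split_ifs <;> simp_all
    rw [Finset.sum_congr rfl (fun j _ => hterm j),
      Finset.sum_ite_eq' Finset.univ i (fun j => if (j : ℕ) < (l : ℕ) then
        a ⟨(l : ℕ) - (j : ℕ), lt_of_le_of_lt (Nat.sub_le _ _) l.isLt⟩ else 0)]
    simp
  rw [hsum, Pi.single_apply]
  rcases eq_or_ne l i with h | h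
  · subst h
    simp
  · rw [if_neg h]
    split_ifs <;> ring

lemma dmap_x0 (n : ℕ) (hn : 0 < n) (a : Fin n → K) :
    dmap K n a (Pi.single (⟨0, hn⟩ : Fin n) 1) = a := by
  funext l
  rw [dmap_single K n hn]
  rcases eq_or_ne l (⟨0, hn⟩ : Fin n) with h | h
  · subst h; simp
  · have h0 : 0 < (l : ℕ) := by
      rcases Nat.eq_zero_or_pos (l : ℕ) with h' | h'
      · exact absurd (Fin.ext h') h
      · exact h'
    rw [if_neg h, if_pos h0]
    exact congrArg a (Fin.ext (by simp))
lemma nfb_single (n : ℕ) (i j k : Fin n) :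
    nfb K n (Pi.single i 1) (Pi.single j 1) k =
      if (j : ℕ) = 0 ∧ (k : ℕ) = (i : ℕ) + 1 then 1 else 0 := by
  rw [nfb_apply]
  by_cases h : 0 < (k : ℕ)
  · rw [dif_pos h]
    simp only [Pi.single_apply, Fin.ext_iff, Fin.val_mk]
    split_ifs <;> first | (exfalso; omega) | ring1
  · rw [dif_neg h, if_neg (by omega)]

lemma nfb_single_succ (n : ℕ) (hn : 0 < n) (i : Fin n) (hi : (i : ℕ) + 1 < n) :
    nfb K n (Pi.single i 1) (Pi.single (⟨0, hn⟩ : Fin n) 1) =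
      Pi.single (⟨(i : ℕ) + 1, hi⟩ : Fin n) 1 := by
  funext k
  rw [nfb_single, Pi.single_apply]
  simp only [Fin.ext_iff, Fin.val_mk, eq_self_iff_true, true_and]
  try split_ifs <;> first | (exfalso; omega) | rfl

lemma nfb_single_last (n : ℕ) (hn : 0 < n) (i : Fin n) (hi : (i : ℕ) + 1 = n) :
    nfb K n (Pi.single i 1) (Pi.single (⟨0, hn⟩ : Fin n) 1) = 0 := by
  funext k
  rw [nfb_single]
  have hk := k.isLt
  have hne : ¬(((⟨0, hn⟩ : Fin n) : ℕ) = 0 ∧ (k : ℕ) = (i : ℕ) + 1) := by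
    rintro ⟨-, h2⟩
    omega
  rw [if_neg hne]
  rfl

lemma nfb_single_ne (n : ℕ) (i j : Fin n) (hj : (j : ℕ) ≠ 0) :
    nfb K n (Pi.single i 1) (Pi.single j 1) = 0 := by
  funext k
  rw [nfb_single, if_neg (by omega)]
  rfl

lemma dmap_der_basis (n : ℕ) (hn : 0 < n) (a : Fin n → K) (i j : Fin n) :
    dmap K n a (nfb K n (Pi.single i 1) (Pi.single j 1)) =
      nfb K n (dmap K n a (Pi.single i 1)) (Pi.single j 1) +
      nfb K n (Pi.single i 1) (dmap K n a (Pi.single j 1)) := by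
  by_cases hj : (j : ℕ) = 0
  · have hj' : j = (⟨0, hn⟩ : Fin n) := Fin.ext hj
    subst hj'
    by_cases hi : (i : ℕ) + 1 < n
    · rw [nfb_single_succ K n hn i hi]
      funext k
      have hkn := k.isLt
      have hidx : (k : ℕ) - 1 - (i : ℕ) = (k : ℕ) - ((i : ℕ) + 1) := by omega
      rw [Pi.add_apply, nfb_apply, nfb_apply]
      simp only [dmap_single K n hn, Pi.single_apply, Fin.ext_iff, Fin.val_mk, hidx]
      split_ifs <;> first | (exfalso; omega) | ring1 | (push_cast; ring1)
    · have hi' : (i : ℕ) + 1 = n := by have := i.isLt; omega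
      rw [nfb_single_last K n hn i hi', map_zero]
      funext k
      have hkn := k.isLt
      rw [Pi.add_apply, Pi.zero_apply, nfb_apply, nfb_apply]
      simp only [dmap_single K n hn, Pi.single_apply, Fin.ext_iff, Fin.val_mk]
      split_ifs <;> first | (exfalso; omega) | ring1 | (push_cast; ring1)
  · rw [nfb_single_ne K n i j hj, map_zero]
    funext k
    have hkn := k.isLt
    rw [Pi.add_apply, Pi.zero_apply, nfb_apply, nfb_apply]
    simp only [dmap_single K n hn, Pi.single_apply, Fin.ext_iff, Fin.val_mk]
    split_ifs <;> first | (exfalso; omega) | ring1 | (push_cast; ring1)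
lemma dmap_der (n : ℕ) (hn : 0 < n) (a : Fin n → K) (u v : Fin n → K) :
    dmap K n a (nfb K n u v) =
      nfb K n (dmap K n a u) v + nfb K n u (dmap K n a v) := by
  have h : (nfb K n).compr₂ (dmap K n a) =
      (nfb K n).comp (dmap K n a) + (nfb K n).compl₂ (dmap K n a) := by
    apply LinearMap.pi_ext
    intro i x
    apply LinearMap.pi_ext
    intro j y
    rw [single_smul' K i x, single_smul' K j y]
    simp only [LinearMap.compr₂_apply, LinearMap.add_apply, LinearMap.comp_apply,
      LinearMap.compl₂_apply, map_smul, LinearMap.smul_apply, LinearMap.map_smul₂]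
    rw [dmap_der_basis K n hn a i j]
    try simp only [smul_add]
  have h2 := LinearMap.congr_fun (LinearMap.congr_fun h u) v
  simpa only [LinearMap.compr₂_apply, LinearMap.add_apply, LinearMap.comp_apply,
    LinearMap.compl₂_apply] using h2

lemma nf_der_formula (n : ℕ) (hn : 0 < n) (d : (Fin n → K) →ₗ[K] (Fin n → K))
    (hd : ∀ u v : Fin n → K, d (nfb K n u v) = nfb K n (d u) v + nfb K n u (d v))
    (i : Fin n) :
    d (Pi.single i 1) =
      dmap K n (d (Pi.single (⟨0, hn⟩ : Fin n) 1)) (Pi.single i 1) := by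
  set a := d (Pi.single (⟨0, hn⟩ : Fin n) 1) with ha
  have H : ∀ m, ∀ hm : m < n,
      d (Pi.single (⟨m, hm⟩ : Fin n) 1) = dmap K n a (Pi.single (⟨m, hm⟩ : Fin n) 1) := by
    intro m
    induction m with
    | zero =>
      intro hm
      have h0 : (⟨0, hm⟩ : Fin n) = ⟨0, hn⟩ := rfl
      rw [h0, dmap_x0]
    | succ m IH =>
      intro hm1
      have hm : m < n := Nat.lt_of_succ_lt hm1
      have e' : Pi.single (⟨m + 1, hm1⟩ : Fin n) (1 : K) =
          nfb K n (Pi.single (⟨m, hm⟩ : Fin n) 1) (Pi.single (⟨0, hn⟩ : Fin n) 1) := by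
        rw [nfb_single_succ K n hn (⟨m, hm⟩ : Fin n) hm1]
      rw [e', hd, dmap_der K n hn a, ← IH hm, dmap_x0]
  exact H i.val i.isLt

lemma dmap_add (n : ℕ) (a b : Fin n → K) :
    dmap K n (a + b) = dmap K n a + dmap K n b := by
  refine LinearMap.ext fun u => funext fun l => ?_
  simp only [LinearMap.add_apply, Pi.add_apply, dmap_apply]
  have h : ∀ i : Fin n, i ∈ Finset.univ →
      (if (i : ℕ) < (l : ℕ) then
        (a ⟨(l : ℕ) - (i : ℕ), lt_of_le_of_lt (Nat.sub_le _ _) l.isLt⟩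
          + b ⟨(l : ℕ) - (i : ℕ), lt_of_le_of_lt (Nat.sub_le _ _) l.isLt⟩) * u i else 0)
      = (if (i : ℕ) < (l : ℕ) then
        a ⟨(l : ℕ) - (i : ℕ), lt_of_le_of_lt (Nat.sub_le _ _) l.isLt⟩ * u i else 0)
      + (if (i : ℕ) < (l : ℕ) then
        b ⟨(l : ℕ) - (i : ℕ), lt_of_le_of_lt (Nat.sub_le _ _) l.isLt⟩ * u i else 0) := by
    intro i _
    split_ifs <;> ring
  rw [Finset.sum_congr rfl h, Finset.sum_add_distrib]
  ring

lemma dmap_smul (n : ℕ) (c : K) (a : Fin n → K) :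
    dmap K n (c • a) = c • dmap K n a := by
  refine LinearMap.ext fun u => funext fun l => ?_
  simp only [LinearMap.smul_apply, Pi.smul_apply, smul_eq_mul, dmap_apply]
  have h : ∀ i : Fin n, i ∈ Finset.univ →
      (if (i : ℕ) < (l : ℕ) then
        c * a ⟨(l : ℕ) - (i : ℕ), lt_of_le_of_lt (Nat.sub_le _ _) l.isLt⟩ * u i else 0)
      = c * (if (i : ℕ) < (l : ℕ) then
        a ⟨(l : ℕ) - (i : ℕ), lt_of_le_of_lt (Nat.sub_le _ _) l.isLt⟩ * u i else 0) := by
    intro i _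
    split_ifs <;> ring
  rw [Finset.sum_congr rfl h, ← Finset.mul_sum]
  ring

/-- every derivation `d` of `NF^n` is given by scalars `a_1, …, a_n`
via `d(x_i) = i·a_1·x_i + ∑_{k=2}^{n+1-i} a_k·x_{i+k-1}` (zero-indexed below), and
the space of derivations of `NF^n` has dimension `n`. -/
theorem nf_derivations (n : ℕ) (hn : 0 < n) :
    (∀ d : (Fin n → K) →ₗ[K] (Fin n → K),
      (∀ u v : Fin n → K, d (nfb K n u v) = nfb K n (d u) v + nfb K n u (d v)) →
      ∃ a : Fin n → K, ∀ i : Fin n,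
        d (Pi.single i 1) = fun l : Fin n =>
          if l = i then ((i : ℕ) + 1 : K) * a ⟨0, hn⟩
          else if (i : ℕ) < (l : ℕ) then
            a ⟨(l : ℕ) - (i : ℕ), lt_of_le_of_lt (Nat.sub_le _ _) l.isLt⟩
          else 0) ∧
    Module.finrank K (DerNF K n) = n := by
  constructor
  · intro d hd
    refine ⟨d (Pi.single (⟨0, hn⟩ : Fin n) 1), fun i => ?_⟩
    funext l
    rw [nf_der_formula K n hn d hd i]
    exact dmap_single K n hn _ i l
  · have hder : ∀ a : Fin n → K, dmap K n a ∈ DerNF K n :=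
      fun a u v => dmap_der K n hn a u v
    let Φ : (Fin n → K) →ₗ[K] DerNF K n :=
      { toFun := fun a => ⟨dmap K n a, hder a⟩
        map_add' := fun a b => Subtype.ext (dmap_add K n a b)
        map_smul' := fun c a => Subtype.ext (dmap_smul K n c a) }
    have hbij : Function.Bijective Φ := by
      constructor
      · intro a b hab
        have hab' : dmap K n a = dmap K n b := congrArg Subtype.val hab
        calc a = dmap K n a (Pi.single (⟨0, hn⟩ : Fin n) 1) := (dmap_x0 K n hn a).symm
        _ = dmap K n b (Pi.single (⟨0, hn⟩ : Fin n) 1) := by rw [hab']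
        _ = b := dmap_x0 K n hn b
      · rintro ⟨d, hd⟩
        have hd' : ∀ u v : Fin n → K,
            d (nfb K n u v) = nfb K n (d u) v + nfb K n u (d v) := hd
        refine ⟨d (Pi.single (⟨0, hn⟩ : Fin n) 1), Subtype.ext ?_⟩
        show dmap K n (d (Pi.single (⟨0, hn⟩ : Fin n) 1)) = d
        apply LinearMap.pi_ext
        intro i x
        rw [single_smul' K i x, map_smul, map_smul, nf_der_formula K n hn d hd' i]
    have e := LinearEquiv.ofBijective Φ hbij
    rw [← LinearEquiv.finrank_eq e, Module.finrank_fin_fun]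
end

section
/- For 1 ≤ j ≤ n, 2 ≤ k ≤ n, the bilinear map φ_{j,k} on NF^n defined by φ_{j,k}(x_j, x_1) = x_k (and zero on all other pairs of basis elements) satisfies the integrability condition φ(x, φ(y,z)) - φ(φ(x,y), z) + φ(φ(x,z), y) = 0 for all x, y, z ∈ NF^n. -/
variable (K : Type*) [Field K] [CharZero K]

/-- The bilinear map `φ_{j,k}` on `NF^n` (zero-indexed): `φ_{j,k}(x_j, x_1) = x_k`,
all other values on pairs of basis vectors zero. -/
def phiJK (n : ℕ) (hn : 0 < n) (j k : Fin n) (u v : Fin n → K) : Fin n → K :=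
  (u j * v ⟨0, hn⟩) • (Pi.single k (1 : K) : Fin n → K)

/-- for `1 ≤ j ≤ n` and `2 ≤ k ≤ n` (zero-indexed: `0 < k`), the
bilinear map `φ_{j,k}` satisfies the integrability condition
`φ(x, φ(y,z)) - φ(φ(x,y), z) + φ(φ(x,z), y) = 0` for all `x, y, z ∈ NF^n`. -/
theorem phi_jk_integrable (n : ℕ) (hn : 0 < n) (j k : Fin n) (hk : 0 < (k : ℕ)) :
    ∀ x y z : Fin n → K,
      phiJK K n hn j k x (phiJK K n hn j k y z)
        - phiJK K n hn j k (phiJK K n hn j k x y) z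
        + phiJK K n hn j k (phiJK K n hn j k x z) y = 0 := by
  intro x y z
  have h0 : k ≠ ⟨0, hn⟩ := by
    intro h; rw [h] at hk; exact lt_irrefl 0 hk
  funext i
  simp only [phiJK, Pi.add_apply, Pi.sub_apply, Pi.smul_apply, smul_eq_mul,
    Pi.single_eq_of_ne h0.symm, Pi.zero_apply]
  ring
end

section
/- Let L be an n-dimensional Leibniz algebra generated by a single element x. Then the elements x_1 = x, x_{i+1} = [x_i, x] form a basis of L, and in this basis the multiplication table is [x_i, x_1] = x_{i+1} for 1 ≤ i ≤ n-1, [x_n, x_1] = Σ_{k=2}^n a_k x_k for some scalars a_2,...,a_n, with all other products of basis elements equal to zero. -/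
variable (K : Type*) [Field K] [CharZero K]

/-- if `L` is an `n`-dimensional Leibniz algebra generated by a single
element `x`, then `x_1 = x`, `x_{i+1} = [x_i, x]` form a basis of `L`, and in this
basis `[x_i, x_1] = x_{i+1}` (`1 ≤ i ≤ n-1`), `[x_n, x_1] = ∑_{k=2}^n a_k x_k` for
some scalars `a_2, …, a_n`, and all other products of basis vectors are zero. -/
theorem single_generated_form
    (L : Type*) [AddCommGroup L] [Module K L] (n : ℕ) (hn : 0 < n)
    (b : L →ₗ[K] L →ₗ[K] L)
    (leib : ∀ x y z : L, b x (b y z) = b (b x y) z - b (b x z) y)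
    (hdim : Module.finrank K L = n)
    (x : L)
    (hgen : ∀ p : Submodule K L, x ∈ p → (∀ u ∈ p, ∀ v ∈ p, b u v ∈ p) → p = ⊤) :
    ∃ a : Fin n → K,
      LinearIndependent K (fun i : Fin n => (fun z => b z x)^[(i : ℕ)] x) ∧
      Submodule.span K (Set.range (fun i : Fin n => (fun z => b z x)^[(i : ℕ)] x)) = ⊤ ∧
      (∀ i : Fin n, (i : ℕ) + 1 < n →
        b ((fun z => b z x)^[(i : ℕ)] x) x = (fun z => b z x)^[(i : ℕ) + 1] x) ∧
      (∀ i j : Fin n, 0 < (j : ℕ) →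
        b ((fun z => b z x)^[(i : ℕ)] x) ((fun z => b z x)^[(j : ℕ)] x) = 0) ∧
      b ((fun z => b z x)^[n - 1] x) x
        = ∑ k : Fin n, (if 0 < (k : ℕ) then a k else 0) • (fun z => b z x)^[(k : ℕ)] x := by
  classical
  haveI : NeZero n := ⟨by omega⟩
  have hfin : Module.Finite K L := Module.finite_of_finrank_pos (by omega)
  set v : ℕ → L := fun i => (fun z => b z x)^[i] x with hv
  have hv0 : v 0 = x := rfl
  have hvsucc : ∀ i, v (i + 1) = b (v i) x := fun i => by
    simp only [hv, Function.iterate_succ_apply']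
  -- all iterates beyond the first are in the right annihilator
  have annih : ∀ j u, b u (v (j + 1)) = 0 := by
    intro j
    induction j with
    | zero =>
      intro u
      rw [hvsucc 0, hv0, leib, sub_self]
    | succ j ih =>
      intro u
      rw [hvsucc (j + 1), leib, ih u, ih (b u x), map_zero, LinearMap.zero_apply,
        sub_zero]
  set p : ℕ → Submodule K L := fun m => Submodule.span K (Set.range fun i : Fin m => v i)
    with hp
  have hmemp : ∀ (m : ℕ) (k : ℕ), k < m → v k ∈ p m := by
    intro m k hk
    exact Submodule.subset_span ⟨⟨k, hk⟩, rfl⟩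
  -- if the chain stabilizes at m, then p m is a subalgebra, hence everything
  have htop : ∀ m, v m ∈ p m → p m = ⊤ := by
    intro m hm
    have hx : x ∈ p m := by
      rcases Nat.eq_zero_or_pos m with h0 | h0
      · rw [← hv0]; rw [h0] at hm ⊢; exact hm
      · rw [← hv0]; exact hmemp m 0 h0
    have hR : ∀ u ∈ p m, b u x ∈ p m := by
      intro u hu
      induction hu using Submodule.span_induction with
      | mem w hw =>
        obtain ⟨i, rfl⟩ := hw
        show b (v (i : ℕ)) x ∈ p m
        rw [← hvsucc]
        rcases Nat.lt_or_ge ((i : ℕ) + 1) m with h | h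
        · exact hmemp m _ h
        · have : (i : ℕ) + 1 = m := by omega
          rw [this]; exact hm
      | zero => rw [map_zero, LinearMap.zero_apply]; exact Submodule.zero_mem _
      | add y z hy hz hy' hz' =>
        rw [map_add, LinearMap.add_apply]; exact Submodule.add_mem _ hy' hz'
      | smul c y hy hy' =>
        rw [map_smul, LinearMap.smul_apply]; exact Submodule.smul_mem _ _ hy'
    have hclosed : ∀ u ∈ p m, ∀ w ∈ p m, b u w ∈ p m := by
      intro u hu w hw
      induction hw using Submodule.span_induction with
      | mem w hw =>
        obtain ⟨i, rfl⟩ := hw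
        show b u (v (i : ℕ)) ∈ p m
        rcases Nat.eq_zero_or_pos (i : ℕ) with h0 | h0
        · rw [h0, hv0]; exact hR u hu
        · have : (i : ℕ) = ((i : ℕ) - 1) + 1 := by omega
          rw [this, annih]; exact Submodule.zero_mem _
      | zero => rw [map_zero]; exact Submodule.zero_mem _
      | add y z hy hz hy' hz' => rw [map_add]; exact Submodule.add_mem _ hy' hz'
      | smul c y hy hy' => rw [map_smul]; exact Submodule.smul_mem _ _ hy'
    exact hgen (p m) hx hclosed
  -- linear independence from non-stabilization
  have hindep : ∀ m, (∀ k < m, v k ∉ p k) → LinearIndependent K (fun i : Fin m => v i) := by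
    intro m
    induction m with
    | zero => intro _; exact linearIndependent_empty_type
    | succ m ih =>
      intro h
      have heq : (fun i : Fin (m + 1) => v i)
          = Fin.snoc (fun i : Fin m => v i) (v m) := by
        funext i
        refine Fin.lastCases ?_ ?_ i
        · simp [Fin.snoc_last]
        · intro j; simp [Fin.snoc_castSucc]
      rw [heq, linearIndependent_fin_snoc]
      exact ⟨ih fun k hk => h k (by omega), h m (Nat.lt_succ_self m)⟩
  -- the chain must stabilize by step n
  have hQ : ∃ k, v k ∈ p k := by
    by_contra h
    push_neg at h
    have hli := hindep (n + 1) (fun k _ => h k)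
    have hle := hli.fintype_card_le_finrank
    rw [hdim, Fintype.card_fin] at hle
    omega
  set k₀ := Nat.find hQ with hk₀def
  have hk₀mem : v k₀ ∈ p k₀ := Nat.find_spec hQ
  have hmin : ∀ k < k₀, v k ∉ p k := fun k hk => Nat.find_min hQ hk
  have htopk : p k₀ = ⊤ := htop k₀ hk₀mem
  -- k₀ = n
  have hk₀le : k₀ ≤ n := by
    by_contra h
    have hli := hindep n (fun k hk => hmin k (by omega))
    have hli' := hindep k₀ hmin
    have hle := hli'.fintype_card_le_finrank
    rw [hdim, Fintype.card_fin] at hle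
    omega
  have hk₀ge : n ≤ k₀ := by
    have h1 : Module.finrank K (p k₀) ≤ k₀ := by
      refine le_trans (finrank_span_le_card _) ?_
      rw [Set.toFinset_card]
      exact le_trans (Fintype.card_range_le _) (by simp)
    rw [htopk, finrank_top, hdim] at h1
    exact h1
  have hk₀ : k₀ = n := le_antisymm hk₀le hk₀ge
  have hLI : LinearIndependent K (fun i : Fin n => v i) := by
    rw [← hk₀]; exact hindep k₀ hmin
  have hTop : Submodule.span K (Set.range fun i : Fin n => v i) = ⊤ := by
    rw [← hk₀]; exact htopk
  -- basis and coordinates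
  let bas : Module.Basis (Fin n) K L := Module.Basis.mk hLI (le_of_eq hTop.symm)
  set a : Fin n → K := fun k => bas.repr (v n) k with ha
  have hrep : ∑ k : Fin n, a k • v k = v n := by
    have := bas.sum_repr (v n)
    simpa only [ha, bas, Module.Basis.coe_mk] using this
  have hn1 : n - 1 + 1 = n := by omega
  have hvn : b (v (n - 1)) x = v n := by
    rw [← hvsucc (n - 1), hn1]
  -- the zeroth coordinate vanishes
  have ha0 : a 0 = 0 := by
    have hzero : b (v (n - 1)) (v n) = 0 := by
      have h := annih (n - 1) (v (n - 1))
      rwa [hn1] at h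
    have hsm : a 0 • v n = 0 := by
      have hexp : b (v (n - 1)) (v n) = a 0 • v n := by
        conv_lhs => rw [← hrep]
        rw [map_sum, Finset.sum_eq_single (0 : Fin n)]
        · rw [map_smul]
          show a 0 • b (v (n - 1)) (v (((0 : Fin n)) : ℕ)) = a 0 • v n
          rw [Fin.val_zero, hv0, hvn]
        · intro k _ hk
          have hkne : (k : ℕ) ≠ 0 := fun h => hk (Fin.ext (by simpa using h))
          have hks : (k : ℕ) = ((k : ℕ) - 1) + 1 := by omega
          rw [map_smul]
          show a k • b (v (n - 1)) (v (k : ℕ)) = 0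
          rw [hks, annih, smul_zero]
        · intro h; exact absurd (Finset.mem_univ _) h
      rw [← hexp, hzero]
    have := congrArg (fun y => bas.repr y 0) hsm
    simp only [map_smul, Finsupp.smul_apply, map_zero, Finsupp.coe_zero,
      Pi.zero_apply, smul_eq_mul] at this
    have : a 0 * a 0 = 0 := this
    exact mul_self_eq_zero.mp this
  refine ⟨a, hLI, hTop, ?_, ?_, ?_⟩
  · intro i hi
    exact (hvsucc i).symm
  · intro i j hj
    show b (v i) (v (j : ℕ)) = 0
    have : (j : ℕ) = ((j : ℕ) - 1) + 1 := by omega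
    rw [this]
    exact annih _ _
  · show b (v (n - 1)) x = ∑ k : Fin n, (if 0 < (k : ℕ) then a k else 0) • v (k : ℕ)
    rw [hvn, ← hrep]
    refine Finset.sum_congr rfl fun k _ => ?_
    rcases Nat.eq_zero_or_pos (k : ℕ) with h0 | h0
    · have hk0 : k = 0 := Fin.ext (by simp [h0])
      rw [hk0]
      simp [ha0]
    · rw [if_pos h0]
end

section
/- The superalgebra NF^{n,m} defined by [y_i, y_1] = x_i (1 ≤ i ≤ n), [x_i, y_1] = (1/2) y_{i+1} (1 ≤ i ≤ m-1), [y_j, x_1] = y_{j+1} (1 ≤ j ≤ m-1), [x_i, x_1] = x_{i+1} (1 ≤ i ≤ n-1), with even basis x_1,...,x_n and odd basis y_1,...,y_m, satisfies the Leibniz superidentity [x,[y,z]] = [[x,y],z] - (-1)^{|y||z|}[[x,z],y] only when m = n or m = n+1. -/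
variable (K : Type*) [Field K] [CharZero K]

/-! The null-filiform Leibniz superalgebra `NF^{n,m}` with even basis
`x_{i+1} = Pi.single i 1 : Fin n → K` and odd basis `y_{j+1} = Pi.single j 1 : Fin m → K`,
and multiplication table (zero-indexed)
`[y_i, y_1] = x_i`, `[x_i, y_1] = ½ y_{i+1}`, `[y_j, x_1] = y_{j+1}`, `[x_i, x_1] = x_{i+1}`,
all other products of basis vectors zero. The bracket is given by its four graded
components `sb00F, sb01F, sb10F, sb11F`. -/

/-- Even-even component: `[x_i, x_1] = x_{i+1}`. -/
def sb00F (n : ℕ) (u v : Fin n → K) : Fin n → K :=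
  fun k => if h : 0 < (k : ℕ) then
    v ⟨0, k.pos⟩ * u ⟨(k : ℕ) - 1, lt_of_le_of_lt (Nat.sub_le _ _) k.isLt⟩
  else 0

/-- Even-odd component: `[x_i, y_1] = ½ y_{i+1}`. -/
def sb01F (n m : ℕ) (u : Fin n → K) (w : Fin m → K) : Fin m → K :=
  fun k => if h : 0 < (k : ℕ) ∧ (k : ℕ) - 1 < n then
    w ⟨0, k.pos⟩ * u ⟨(k : ℕ) - 1, h.2⟩ / 2
  else 0

/-- Odd-even component: `[y_j, x_1] = y_{j+1}`. -/
def sb10F (n m : ℕ) (w : Fin m → K) (v : Fin n → K) : Fin m → K :=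
  fun k => if h : 0 < (k : ℕ) ∧ 0 < n then
    v ⟨0, h.2⟩ * w ⟨(k : ℕ) - 1, lt_of_le_of_lt (Nat.sub_le _ _) k.isLt⟩
  else 0

/-- Odd-odd component: `[y_i, y_1] = x_i`. -/
def sb11F (n m : ℕ) (w w' : Fin m → K) : Fin n → K :=
  fun k => if h : (k : ℕ) < m then
    w' ⟨0, Nat.lt_of_le_of_lt (Nat.zero_le _) h⟩ * w ⟨(k : ℕ), h⟩
  else 0

/-- The Leibniz superidentity `[x,[y,z]] = [[x,y],z] - (-1)^{|y||z|}[[x,z],y]`,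
written out for the four graded components of a bracket on `V₀ ⊕ V₁` with
`V₀ = Fin n → K`, `V₁ = Fin m → K` (one equation for each parity of `x, y, z`). -/
def SuperLeibniz (n m : ℕ)
    (b00 : (Fin n → K) → (Fin n → K) → (Fin n → K))
    (b01 : (Fin n → K) → (Fin m → K) → (Fin m → K))
    (b10 : (Fin m → K) → (Fin n → K) → (Fin m → K))
    (b11 : (Fin m → K) → (Fin m → K) → (Fin n → K)) : Prop :=
  (∀ (x y z : Fin n → K), b00 x (b00 y z) = b00 (b00 x y) z - b00 (b00 x z) y) ∧
  (∀ (x y : Fin n → K) (z : Fin m → K),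
    b01 x (b01 y z) = b01 (b00 x y) z - b10 (b01 x z) y) ∧
  (∀ (x : Fin n → K) (y : Fin m → K) (z : Fin n → K),
    b01 x (b10 y z) = b10 (b01 x y) z - b01 (b00 x z) y) ∧
  (∀ (x : Fin n → K) (y z : Fin m → K),
    b00 x (b11 y z) = b11 (b01 x y) z + b11 (b01 x z) y) ∧
  (∀ (x : Fin m → K) (y z : Fin n → K),
    b10 x (b00 y z) = b10 (b10 x y) z - b10 (b10 x z) y) ∧
  (∀ (x : Fin m → K) (y : Fin n → K) (z : Fin m → K),
    b11 x (b01 y z) = b11 (b10 x y) z - b00 (b11 x z) y) ∧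
  (∀ (x y : Fin m → K) (z : Fin n → K),
    b11 x (b10 y z) = b00 (b11 x y) z - b11 (b10 x z) y) ∧
  (∀ (x y z : Fin m → K),
    b10 x (b11 y z) = b01 (b11 x y) z + b01 (b11 x z) y)

/-- the superalgebra `NF^{n,m}` (with nontrivial even and odd parts)
satisfies the Leibniz superidentity only when `m = n` or `m = n + 1`. -/
theorem NFnm_leibniz_only_if (n m : ℕ) (hn : 0 < n) (hm : 0 < m) :
    SuperLeibniz K n m (sb00F K n) (sb01F K n m) (sb10F K n m) (sb11F K n m) →
    m = n ∨ m = n + 1 := by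
  intro h
  obtain ⟨-, -, h3, -, -, -, h7, -⟩ := h
  by_contra hc
  push_neg at hc
  rcases Nat.lt_or_ge m n with hlt | hge
  · -- m < n: conjunct 7 fails at x = y_m, y = y_1, z = x_1, component m
    have := congrFun (h7 (Pi.single ⟨m - 1, by omega⟩ 1) (Pi.single ⟨0, hm⟩ 1)
      (Pi.single ⟨0, hn⟩ 1)) ⟨m, hlt⟩
    simp only [sb00F, sb01F, sb10F, sb11F, Pi.single_apply, Pi.sub_apply] at this
    simp only [hm, if_true] at this
    norm_num [Fin.ext_iff, hm] at this
  · have hge2 : n + 2 ≤ m := by omega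
    have := congrFun (h3 (Pi.single ⟨n - 1, by omega⟩ 1) (Pi.single ⟨0, hm⟩ 1)
      (Pi.single ⟨0, hn⟩ 1)) ⟨n + 1, by omega⟩
    simp only [sb00F, sb01F, sb10F, sb11F, Pi.single_apply, Pi.sub_apply] at this
    norm_num [Fin.ext_iff, hn] at this
end

section
/- Every odd derivation d of the Leibniz superalgebra NF^{n,m} (m = n or n+1) has the form d(y_j) = Σ_{k=1}^{n+1-j} b_k x_{j+k-1} for 1 ≤ j ≤ n and d(x_i) = (1/2)(b_1 y_{i+1} - Σ_{k=2}^{m-i} b_k y_{i+k}) for 1 ≤ i ≤ m-1, for some scalars b_1, b_2, .... -/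
variable (K : Type*) [Field K] [CharZero K]

/-- every odd derivation `(d₀ : L₀ → L₁, d₁ : L₁ → L₀)` of `NF^{n,m}`
(`m = n` or `m = n+1`), i.e. a grading-reversing map with
`d[x,y] = (-1)^{|y|}[d x, y] + [x, d y]`, is given by scalars `b_1, b_2, …` via
`d(y_j) = ∑_{k=1}^{n+1-j} b_k x_{j+k-1}` (`1 ≤ j ≤ n`) and
`d(x_i) = ½(b_1 y_{i+1} - ∑_{k=2}^{m-i} b_k y_{i+k})` (`1 ≤ i ≤ m-1`)
(zero-indexed below). -/
theorem odd_derivations_NFnm (n m : ℕ) (hn : 0 < n) (hm : m = n ∨ m = n + 1)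
    (d0 : (Fin n → K) →ₗ[K] (Fin m → K)) (d1 : (Fin m → K) →ₗ[K] (Fin n → K))
    (h00 : ∀ u v : Fin n → K,
      d0 (sb00F K n u v) = sb10F K n m (d0 u) v + sb01F K n m u (d0 v))
    (h01 : ∀ (u : Fin n → K) (w : Fin m → K),
      d1 (sb01F K n m u w) = - sb11F K n m (d0 u) w + sb00F K n u (d1 w))
    (h10 : ∀ (w : Fin m → K) (u : Fin n → K),
      d1 (sb10F K n m w u) = sb00F K n (d1 w) u + sb11F K n m w (d0 u))
    (h11 : ∀ w w' : Fin m → K,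
      d0 (sb11F K n m w w') = - sb01F K n m (d1 w) w' + sb10F K n m w (d1 w')) :
    ∃ b : Fin n → K,
      (∀ j : Fin m, (j : ℕ) < n →
        d1 (Pi.single j 1) = fun l : Fin n =>
          if (j : ℕ) ≤ (l : ℕ) then
            b ⟨(l : ℕ) - (j : ℕ), lt_of_le_of_lt (Nat.sub_le _ _) l.isLt⟩
          else 0) ∧
      (∀ i : Fin n, (i : ℕ) + 1 < m →
        d0 (Pi.single i 1) = fun l : Fin m =>
          if (l : ℕ) = (i : ℕ) + 1 then b ⟨0, hn⟩ / 2
          else if (i : ℕ) + 1 < (l : ℕ) then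
            - b ⟨(l : ℕ) - (i : ℕ) - 1, by have := l.isLt; omega⟩ / 2
          else 0) := by

  have hm0 : 0 < m := by omega
  have hnm : n ≤ m := by omega
  -- stepA: the shift relation d(y_{j+1}) = S(d(y_j)) + c x_j, where
  -- c is the coefficient of y₁ in d(x₁)
  have stepA : ∀ (j j' : Fin m), (j' : ℕ) = (j : ℕ) + 1 → ∀ l : Fin n,
      d1 (Pi.single j' 1) l =
        (if h : 0 < (l : ℕ) then
          d1 (Pi.single j 1) ⟨(l : ℕ) - 1, by omega⟩ else 0)
        + (if (l : ℕ) = (j : ℕ) then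
            d0 (Pi.single (⟨0, hn⟩ : Fin n) 1) ⟨0, by omega⟩ else 0) := by
    intro j j' hj' l
    have e1 : sb10F K n m (Pi.single j 1) (Pi.single (⟨0, hn⟩ : Fin n) 1)
        = Pi.single j' 1 := by
      funext k
      simp only [sb10F, Pi.single_apply, Fin.ext_iff]
      split_ifs <;> first | ring1 | (exfalso; omega)
    have key := congrFun ((e1 ▸ h10 (Pi.single j 1) (Pi.single (⟨0, hn⟩ : Fin n) 1))) l
    rw [key]
    simp only [Pi.add_apply, sb00F, sb11F, Pi.single_apply, Fin.ext_iff, Fin.val_mk]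
    have hln : (l : ℕ) < n := l.isLt
    split_ifs <;> first | ring1 | (exfalso; omega)
  -- step B : c = 0
  have hc : d0 (Pi.single (⟨0, hn⟩ : Fin n) 1) ⟨0, by omega⟩ = (0 : K) := by
    have key := congrFun (h01 (Pi.single (⟨0, hn⟩ : Fin n) 1)
      (Pi.single (⟨0, hm0⟩ : Fin m) 1)) ⟨0, hn⟩
    by_cases hm1 : 1 < m
    · have e1 : sb01F K n m (Pi.single (⟨0, hn⟩ : Fin n) 1)
          (Pi.single (⟨0, hm0⟩ : Fin m) 1)
          = (2⁻¹ : K) • (Pi.single (⟨1, hm1⟩ : Fin m) 1 : Fin m → K) := by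
        funext k
        simp only [sb01F, Pi.smul_apply, Pi.single_apply, Fin.ext_iff, Fin.val_mk,
          smul_eq_mul]
        split_ifs <;> first | ring1 | (exfalso; omega)
      rw [e1, map_smul] at key
      have e2 := stepA ⟨0, hm0⟩ ⟨1, hm1⟩ rfl ⟨0, hn⟩
      simp only [Pi.smul_apply, smul_eq_mul, e2, Pi.add_apply, Pi.neg_apply,
        sb11F, sb00F, Pi.single_apply, Fin.ext_iff, Fin.val_mk] at key
      norm_num at key
      rw [dif_pos hm0] at key
      linear_combination (2 / 3 : K) * key
    · have hm1' : m = 1 := by omega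
      have e1 : sb01F K n m (Pi.single (⟨0, hn⟩ : Fin n) 1)
          (Pi.single (⟨0, hm0⟩ : Fin m) 1) = 0 := by
        funext k
        simp only [sb01F, Pi.zero_apply]
        split_ifs with h
        · exfalso; have := k.isLt; omega
        · rfl
      rw [e1, map_zero] at key
      simp only [Pi.add_apply, Pi.neg_apply, Pi.zero_apply, sb11F, sb00F,
        Pi.single_apply, Fin.ext_iff, Fin.val_mk] at key
      norm_num at key
      exact key hm0
  -- step C : formula for d1 on basis vectors, by induction
  have stepC : ∀ (N : ℕ) (j : Fin m), (j : ℕ) = N → (j : ℕ) < n → ∀ l : Fin n,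
      d1 (Pi.single j 1) l =
        if (j : ℕ) ≤ (l : ℕ) then
          d1 (Pi.single (⟨0, hm0⟩ : Fin m) 1)
            ⟨(l : ℕ) - (j : ℕ), lt_of_le_of_lt (Nat.sub_le _ _) l.isLt⟩
        else 0 := by
    intro N
    induction N with
    | zero =>
      intro j hj0 hjn l
      have hj : j = ⟨0, hm0⟩ := Fin.ext hj0
      subst hj
      rw [if_pos (by omega)]
      congr 1 <;> exact Fin.ext (by simp)
    | succ N ih =>
      intro j hjN hjn l
      have hNn : N < n := by omega
      have hNm : N < m := by omega
      have eA := stepA ⟨N, hNm⟩ j hjN l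
      rw [eA, hc]
      simp only [ite_self, add_zero, Fin.val_mk]
      by_cases hl : 0 < (l : ℕ)
      · rw [dif_pos hl, ih ⟨N, hNm⟩ rfl hNn ⟨(l : ℕ) - 1, by omega⟩]
        simp only [Fin.val_mk]
        have hln : (l : ℕ) < n := l.isLt
        split_ifs with h1 h2 h2
        · rw [show (⟨(l : ℕ) - 1 - N, by omega⟩ : Fin n)
            = ⟨(l : ℕ) - (j : ℕ), by omega⟩ from
              Fin.ext (show (l : ℕ) - 1 - N = (l : ℕ) - (j : ℕ) by omega)]
        · exfalso; omega
        · exfalso; omega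
        · rfl
      · rw [dif_neg hl, if_neg (by omega)]
  -- the scalars
  refine ⟨fun k => d1 (Pi.single (⟨0, hm0⟩ : Fin m) 1) k, ?_, ?_⟩
  · intro j hjn
    funext l
    exact stepC (j : ℕ) j rfl hjn l
  · -- step D : formula for d0 on basis vectors
    intro i hi1
    have him : (i : ℕ) < m := by omega
    have e1 : sb11F K n m (Pi.single (⟨(i : ℕ), him⟩ : Fin m) 1)
        (Pi.single (⟨0, hm0⟩ : Fin m) 1) = Pi.single i 1 := by
      funext k
      have hk : (k : ℕ) < n := k.isLt
      simp only [sb11F, Pi.single_apply, Fin.ext_iff, Fin.val_mk]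
      split_ifs <;> first | ring1 | (exfalso; omega)
    have key := h11 (Pi.single (⟨(i : ℕ), him⟩ : Fin m) 1)
      (Pi.single (⟨0, hm0⟩ : Fin m) 1)
    rw [e1] at key
    funext l
    rw [congrFun key l]
    have hd1 := stepC (i : ℕ) ⟨(i : ℕ), him⟩ rfl i.isLt
    simp only [Pi.add_apply, Pi.neg_apply, sb01F, sb10F, Pi.single_apply,
      Fin.ext_iff, Fin.val_mk, hd1]
    have hlm : (l : ℕ) < m := l.isLt
    have hin : (i : ℕ) < n := i.isLt
    split_ifs <;>
      first
        | ring1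
        | (exfalso; omega)
        | (rw [show (⟨(l : ℕ) - 1 - (i : ℕ), by omega⟩ : Fin n)
              = ⟨(l : ℕ) - (i : ℕ) - 1, by omega⟩ from
              Fin.ext (show (l : ℕ) - 1 - (i : ℕ) = (l : ℕ) - (i : ℕ) - 1 by omega)]; ring1)
        | (rw [show (⟨(l : ℕ) - 1 - (i : ℕ), by omega⟩ : Fin n)
              = ⟨0, hn⟩ from
              Fin.ext (show (l : ℕ) - 1 - (i : ℕ) = 0 by omega)]; ring1)
end
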